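/- arXiv:1804.02511 — 3 statements merged into one kernel-verified Lean document; each statement's English description precedes it below -/
import Mathlib

section
/- The affine index polynomial P_K(t) is invariant under oriented virtual isotopy: if two labeled oriented virtual knot diagrams are related by oriented classical Reidemeister moves, virtual Reidemeister moves, or the detour move, then their affine index polynomials are equal; hence P_K(t) is an invariant of virtual knots. -/
/-!
# Virtual knots and links via signed Gauss codes

A virtual knot or link diagram, up to the virtual Reidemeister moves and the
detour move, is faithfully encoded by its signed oriented Gauss code: the
cyclic sequence, along each component, of passages through the classical
crossings, each passage recording the crossing's name, whether the strand
passes over or under, and the crossing sign.  Virtual crossings and the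
detour move are invisible in this encoding, so oriented virtual isotopy is
generated by the oriented classical Reidemeister moves together with
re-encoding moves (rotation of the base point, permutation of the components,
renaming of the crossings).
-/

open LaurentPolynomial

/-- A passage of a strand through a classical crossing of a virtual diagram. -/
structure Passage where
  id : ℕ
  isOver : Bool
  sign : ℤ
  deriving DecidableEq, Repr

instance : Inhabited Passage := ⟨⟨0, false, 0⟩⟩

/-- The affine-label increment when the strand passes through a crossing:
crossing to the left increases the label by one, crossing to the right
decreases it by one.  For a positive crossing the over-strand crosses to the
right and the under-strand to the left; for a negative crossing it is the
other way around.  Labels are unchanged at virtual crossings. -/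
def Passage.inc (p : Passage) : ℤ := if p.isOver then -p.sign else p.sign

/-- The Gauss code of one oriented circle component. -/
abbrev KCode := List Passage

/-- The list of classical crossing names appearing in a code. -/
def crossIds (a : KCode) : List ℕ := (a.map Passage.id).dedup

/-- The number of classical crossings. -/
def numCross (a : KCode) : ℕ := (crossIds a).length

/-- A valid knot code: every crossing has sign `±1` and occurs exactly once as
an over-passage and exactly once as an under-passage, with consistent sign. -/
def ValidK (a : KCode) : Prop :=
  ∀ p ∈ a, (p.sign = 1 ∨ p.sign = -1) ∧
    (a.filter (fun q => q.id == p.id && q.isOver)).length = 1 ∧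
    (a.filter (fun q => q.id == p.id && !q.isOver)).length = 1 ∧
    (∀ q ∈ a, q.id = p.id → q.sign = p.sign)

/-- The canonical affine label of the arc entering the `k`-th passage
(base label `0` on the arc entering the `0`-th passage). -/
def labelAt (a : KCode) (k : ℕ) : ℤ := ((a.take k).map Passage.inc).sum

/-- Position of the over-passage of crossing `i`. -/
def overPos (a : KCode) (i : ℕ) : ℕ := a.findIdx (fun p => p.id == i && p.isOver)

/-- Position of the under-passage of crossing `i`. -/
def underPos (a : KCode) (i : ℕ) : ℕ := a.findIdx (fun p => p.id == i && !p.isOver)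

/-- The sign of crossing `i`. -/
def sgn (a : KCode) (i : ℕ) : ℤ :=
  ((a.find? (fun p => p.id == i)).map Passage.sign).getD 0

/-- The weight `W_K(c)` of a crossing `c`: with incoming labels `a` (left) and
`b` (right) it is `W₊ = a - b - 1` if `sgn c = 1` and `W₋ = b - a + 1` if
`sgn c = -1`; equivalently it is
(label entering the over-passage) − (label entering the under-passage) − sign. -/
def wt (a : KCode) (i : ℕ) : ℤ :=
  labelAt a (overPos a i) - labelAt a (underPos a i) - sgn a i

/-- The affine index polynomial `P_K(t) = ∑_c sgn(c) (t^{W_K(c)} - 1)`. -/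
noncomputable def affP (a : KCode) : LaurentPolynomial ℤ :=
  ((crossIds a).map (fun i => (C (sgn a i)) * (T (wt a i) - 1))).sum

/-- The signed crossing count `wr_n(K) = ∑_{c : W_K(c) = n} sgn(c)`. -/
def wrn (a : KCode) (n : ℤ) : ℤ :=
  (((crossIds a).filter (fun i => wt a i == n)).map (sgn a)).sum

/-- A crossing is odd when it flanks an odd number of symbols of the Gauss
code, i.e. when the positions of its two passages differ by an even number. -/
def OddCross (a : KCode) (i : ℕ) : Bool := (overPos a i + underPos a i) % 2 == 0

/-- The odd writhe `J(K)`: the sum of the signs of the odd crossings. -/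
def oddWrithe (a : KCode) : ℤ := (((crossIds a).filter (OddCross a)).map (sgn a)).sum

/-- The reverse `K̄` of `K`: the same diagram with reversed orientation. -/
def reverseK (a : KCode) : KCode := a.reverse

/-- The (flat) mirror image `K*`: every classical crossing is switched, which
exchanges over- and under-passages and reverses all crossing signs. -/
def switchAll (a : KCode) : KCode := a.map (fun p => ⟨p.id, !p.isOver, -p.sign⟩)

/-- The vertical mirror image `K^!`: reflect the diagram in a plane
perpendicular to the plane of the diagram (which keeps the over/under data
and reverses all crossing signs) and reverse the orientation. -/
def vmirror (a : KCode) : KCode := (a.map (fun p => ⟨p.id, p.isOver, -p.sign⟩)).reverse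

/-- Rename the crossings of a code by `f`. -/
def relabel (f : ℕ → ℕ) (a : KCode) : KCode := a.map (fun p => { p with id := f p.id })

/-! ## Links -/

/-- A link code: a list of circle components. -/
abbrev LCode := List KCode

/-- Validity of a link code: the crossing data is globally consistent. -/
def ValidLink (L : LCode) : Prop := ValidK L.flatten

def crossIdsL (L : LCode) : List ℕ := crossIds L.flatten

def sgnL (L : LCode) (i : ℕ) : ℤ := sgn L.flatten i

/-- An affine (integer) labeling of the arcs of a link diagram:
`lab c k` is the label of the arc entering the `k`-th passage of the `c`-th
component; at each classical crossing with left incoming label `a` and right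
incoming label `b`, the left outgoing label is `b+1` and the right outgoing
label is `a-1`, i.e. passing through a passage changes the label by its
increment.  Labels are unchanged at virtual crossings. -/
def IsAffineLabeling (L : LCode) (lab : ℕ → ℕ → ℤ) : Prop :=
  ∀ c, c < L.length → ∀ k, k < (L.getD c []).length →
    lab c ((k + 1) % (L.getD c []).length) =
      lab c k + ((L.getD c []).getD k default).inc

/-- Locations `(component, position)` of the passages of crossing `i` that are
over-passages (`sel = true`) resp. under-passages (`sel = false`). -/
def locs (L : LCode) (i : ℕ) (sel : Bool) : List (ℕ × ℕ) :=
  (List.range L.length).flatMap (fun c =>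
    (List.range (L.getD c []).length).filterMap (fun k =>
      if ((L.getD c []).getD k default).id = i ∧ ((L.getD c []).getD k default).isOver = sel
      then some (c, k) else none))

/-- The weight of crossing `i` of a link diagram with affine labeling `lab`. -/
def wtL (L : LCode) (lab : ℕ → ℕ → ℤ) (i : ℕ) : ℤ :=
  lab ((locs L i true).headD (0, 0)).1 ((locs L i true).headD (0, 0)).2
    - lab ((locs L i false).headD (0, 0)).1 ((locs L i false).headD (0, 0)).2
    - sgnL L i

/-- The affine index polynomial of an affinely labeled link diagram. -/
noncomputable def affPL (L : LCode) (lab : ℕ → ℕ → ℤ) : LaurentPolynomial ℤ :=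
  ((crossIdsL L).map (fun i => (C (sgnL L i)) * (T (wtL L lab i) - 1))).sum

/-- The passages of component `c` whose partner passage lies on a different
component. -/
def crossPassages (L : LCode) (c : ℕ) : KCode :=
  (L.getD c []).filter (fun p =>
    ((L.getD c []).filter (fun q => q.id == p.id)).length == 1)

/-- The algebraic intersection number of component `c` with the union of the
other components: the signed count, in the plane, of the crossings of
component `c` with the other components (the strand crossing to the left
counts `+1`, to the right `−1`). -/
def algInt (L : LCode) (c : ℕ) : ℤ := ((crossPassages L c).map Passage.inc).sum

/-- A multi-component diagram is compatible when every component has algebraic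
intersection number zero with the union of the other components. -/
def Compatible (L : LCode) : Prop := ∀ c < L.length, algInt L c = 0

/-! ## Virtual isotopy

Link codes whose components carry an inert tracking label (a natural number);
the labels are preserved by isotopy and are used to follow components through
the births, deaths and saddles of a cobordism. -/

abbrev LLC := List (ℕ × KCode)

def plainL (L : LLC) : LCode := L.map Prod.snd

def idsOf (L : LLC) : List ℕ := crossIdsL (plainL L)

def pieceIds (L : LLC) : List ℕ := L.map Prod.fst

/-- `ReplC c c' segs segs'`: the circle `c'` is obtained from the circle `c`
by replacing, scanning from left to right, an initial batch of the listed
segments (`u` is replaced by `v` for each pair `(u, v)`), leaving `segs'`. -/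
inductive ReplC : KCode → KCode → List (KCode × KCode) → List (KCode × KCode) → Prop
  | nil (c : KCode) (segs : List (KCode × KCode)) : ReplC c c segs segs
  | cons {y y' : KCode} {segs segs' : List (KCode × KCode)} (x u v : KCode) :
      ReplC y y' segs segs' →
      ReplC (x ++ u ++ y) (x ++ v ++ y') ((u, v) :: segs) segs'

/-- `ReplL L L' segs`: the labeled link `L'` is obtained from `L` by
simultaneously performing all the listed segment replacements, in scanning
order. -/
inductive ReplL : LLC → LLC → List (KCode × KCode) → Prop
  | nil : ReplL [] [] []
  | cons {c c' : KCode} {L L' : LLC} {segs segs' : List (KCode × KCode)} (k : ℕ) :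
      ReplC c c' segs segs' → ReplL L L' segs' → ReplL ((k, c) :: L) ((k, c') :: L') segs

/-- `if b then [p, q] else [q, p]`. -/
def pairOf (b : Bool) (p q : Passage) : KCode := if b then [p, q] else [q, p]

/-- A generating move of oriented virtual isotopy on Gauss codes.  The
constructors `perm`, `rotate`, `rename` are inessential re-encodings; in
particular the virtual Reidemeister moves and the detour move leave the Gauss
code unchanged.  The constructors `r1`, `r2`, `r3` are the oriented classical
Reidemeister moves (`r1` and `r2` are stated as insertions; the inverse moves
are recovered by taking the symmetric closure). -/
inductive MoveStep : LLC → LLC → Prop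
  /-- re-ordering the components -/
  | perm {L L' : LLC} (h : L.Perm L') : MoveStep L L'
  /-- moving the base point of a component -/
  | rotate (k : ℕ) (x y : KCode) (L : LLC) :
      MoveStep ((k, x ++ y) :: L) ((k, y ++ x) :: L)
  /-- renaming the crossings injectively -/
  | rename {L : LLC} (f : ℕ → ℕ) (hf : Function.Injective f) :
      MoveStep L (L.map (fun c => (c.1, relabel f c.2)))
  /-- first Reidemeister move: insertion of a kink with a fresh crossing `i` -/
  | r1 {L L' : LLC} (i : ℕ) (o : Bool) (s : ℤ) (hs : s = 1 ∨ s = -1) (hi : i ∉ idsOf L)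
      (h : ReplL L L' [([], [⟨i, o, s⟩, ⟨i, !o, s⟩])]) : MoveStep L L'
  /-- second Reidemeister move: one strand slides across another, creating two
  fresh crossings `i, j` with opposite signs; `o` records whether the first
  strand passes over, `ord` the relative orientation of the strands. -/
  | r2 {L L' : LLC} (i j : ℕ) (o ord : Bool) (s : ℤ) (hs : s = 1 ∨ s = -1)
      (hij : i ≠ j) (hi : i ∉ idsOf L) (hj : j ∉ idsOf L)
      (h : ReplL L L'
        [([], [⟨i, o, s⟩, ⟨j, o, -s⟩]),
         ([], if ord then [⟨j, !o, -s⟩, ⟨i, !o, s⟩] else [⟨i, !o, s⟩, ⟨j, !o, -s⟩])]) :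
      MoveStep L L'
  /-- third Reidemeister move: a strand slides across a crossing.  Crossing
  `i` joins the top and the middle strand, `j` the top and the bottom strand,
  `k` the middle and the bottom strand; on each of the three strands the
  corresponding pair of adjacent passages is transposed.  The product of the
  three signs is `+1`, and the orders of the pairs along the strands are
  correlated with the signs as dictated by the orientations of the three
  strands (`t` records the order along the top strand). -/
  | r3 {L L' : LLC} (i j k : ℕ) (si sj sk : ℤ)
      (hsi : si = 1 ∨ si = -1) (hsj : sj = 1 ∨ sj = -1) (hsk : sk = 1 ∨ sk = -1)
      (hprod : si * sj * sk = 1)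
      (hij : i ≠ j) (hik : i ≠ k) (hjk : j ≠ k)
      (t : Bool) (segs : List (KCode × KCode))
      (hsegs : segs.Perm
        [(pairOf t ⟨i, true, si⟩ ⟨j, true, sj⟩,
          pairOf (!t) ⟨i, true, si⟩ ⟨j, true, sj⟩),
         (pairOf (t == (sj * sk == 1)) ⟨i, false, si⟩ ⟨k, true, sk⟩,
          pairOf (!(t == (sj * sk == 1))) ⟨i, false, si⟩ ⟨k, true, sk⟩),
         (pairOf (t == (si * sk == 1)) ⟨j, false, sj⟩ ⟨k, false, sk⟩,
          pairOf (!(t == (si * sk == 1))) ⟨j, false, sj⟩ ⟨k, false, sk⟩)])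
      (h : ReplL L L' segs) : MoveStep L L'

/-- Oriented virtual isotopy: the equivalence relation generated by the
classical Reidemeister moves, the virtual Reidemeister moves and the detour
move (the latter two being invisible on Gauss codes). -/
def Isotopic : LLC → LLC → Prop := Relation.EqvGen MoveStep

/-! ## Cobordism

A cobordism is a sequence of isotopies, births and deaths of unknotted
circles, and oriented saddle moves.  The schema of a cobordism is the abstract
surface it generates; we track its connected pieces through the component
labels, the genus of each piece, and the total genus of the pieces that have
been closed off, so that the genus of the schema is well defined. -/

/-- A state of a cobordism in progress: the current labeled link diagram (the
label of a circle names the surface piece it bounds), the genus of each piece,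
and the accumulated genus of closed-off pieces. -/
structure CobState where
  link : LLC
  genus : ℕ → ℕ
  closed : ℕ

/-- One step of a virtual cobordism. -/
inductive CobStep : CobState → CobState → Prop
  /-- a virtual isotopy move -/
  | isot {L L' : LLC} (g : ℕ → ℕ) (c : ℕ) (h : MoveStep L L') :
      CobStep ⟨L, g, c⟩ ⟨L', g, c⟩
  /-- birth of an unknotted circle, starting a fresh piece of genus `0` -/
  | birth (k : ℕ) (L : LLC) (g : ℕ → ℕ) (c : ℕ) (hk : k ∉ pieceIds L) :
      CobStep ⟨L, g, c⟩ ⟨(k, []) :: L, Function.update g k 0, c⟩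
  /-- death of an unknotted circle whose piece still has other boundary -/
  | death_keep (k : ℕ) (L : LLC) (g : ℕ → ℕ) (c : ℕ) (hk : k ∈ pieceIds L) :
      CobStep ⟨(k, []) :: L, g, c⟩ ⟨L, g, c⟩
  /-- death of an unknotted circle closing off its piece -/
  | death_close (k : ℕ) (L : LLC) (g : ℕ → ℕ) (c : ℕ) (hk : k ∉ pieceIds L) :
      CobStep ⟨(k, []) :: L, g, c⟩ ⟨L, g, c + g k⟩
  /-- oriented saddle splitting one circle into two (genus unchanged) -/
  | saddle_split (k : ℕ) (x y : KCode) (L : LLC) (g : ℕ → ℕ) (c : ℕ) :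
      CobStep ⟨(k, x ++ y) :: L, g, c⟩ ⟨(k, x) :: (k, y) :: L, g, c⟩
  /-- oriented saddle merging two boundary circles of the same piece
  (the genus of the piece increases by one) -/
  | saddle_merge_same (k : ℕ) (x y : KCode) (L : LLC) (g : ℕ → ℕ) (c : ℕ) :
      CobStep ⟨(k, x) :: (k, y) :: L, g, c⟩
        ⟨(k, x ++ y) :: L, Function.update g k (g k + 1), c⟩
  /-- oriented saddle merging boundary circles of two different pieces
  (the pieces merge and their genera add) -/
  | saddle_merge_diff (j k : ℕ) (x y : KCode) (L : LLC) (g : ℕ → ℕ) (c : ℕ)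
      (hjk : j ≠ k) :
      CobStep ⟨(j, x) :: (k, y) :: L, g, c⟩
        ⟨(j, x ++ y) :: (L.map fun p => if p.1 = k then (j, p.2) else p),
          Function.update (Function.update g j (g j + g k)) k 0, c⟩

/-- A virtual cobordism: a finite sequence of cobordism steps. -/
def Cob : CobState → CobState → Prop := Relation.ReflTransGen CobStep

/-- `L` and `L'` cobound a virtual cobordism (of some genus). -/
def Cobordant (L L' : LLC) : Prop :=
  ∃ g' c', Cob ⟨L, fun _ => 0, 0⟩ ⟨L', g', c'⟩

/-- The knot `a` bounds a virtual surface schema of genus `G`: there is a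
virtual cobordism from `a` to the empty link, and `G` is the total genus of
the pieces of its schema. -/
def BoundsGenus (a : KCode) (G : ℕ) : Prop :=
  ∃ g' : ℕ → ℕ, Cob ⟨[(0, a)], fun _ => 0, 0⟩ ⟨[], g', G⟩

/-! ## Concordance

A genus-zero cobordism (concordance) is one in which every critical point is
paired: each birth is paired with a canceling saddle and each death with a
canceling saddle.  An elementary concordance is a birth followed (after
isotopy) by a saddle amalgamating the born circle, or a saddle splitting off a
circle that (after isotopy) dies. -/

/-- One step of a concordance. -/
inductive ConcStep : LLC → LLC → Prop
  /-- a virtual isotopy -/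
  | isot {L L' : LLC} (h : Isotopic L L') : ConcStep L L'
  /-- elementary concordance: birth of an unknotted circle (tracked by the
  fresh label `k`), isotopy, then an oriented saddle amalgamating the born
  circle with another component -/
  | birth_saddle {L rest : LLC} (j k : ℕ) (x y : KCode)
      (hk : k ∉ pieceIds L)
      (h : Isotopic ((k, []) :: L) ((j, x) :: (k, y) :: rest)) :
      ConcStep L ((j, x ++ y) :: rest)
  /-- elementary concordance: an oriented saddle splitting off a circle
  (tracked by the fresh label `k`) which after isotopy is an unknotted,
  unlinked circle and dies -/
  | saddle_death {M rest : LLC} (j k : ℕ) (x y : KCode)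
      (hk : k ∉ pieceIds ((j, x ++ y) :: M))
      (h : Isotopic ((j, x) :: (k, y) :: M) ((k, []) :: rest)) :
      ConcStep ((j, x ++ y) :: M) rest

/-- Virtual concordance: genus-zero virtual cobordism. -/
def Concordant : LLC → LLC → Prop := Relation.EqvGen ConcStep

/-- Virtual concordance of knots. -/
def ConcordantK (a b : KCode) : Prop := Concordant [(0, a)] [(0, b)]

/-- The unknot: a circle with no classical crossings. -/
def unknotCode : KCode := []

/-- A virtual knot is (virtually) slice when it is virtually concordant to
the unknot. -/
def SliceK (a : KCode) : Prop := ConcordantK a unknotCode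

/-! ## Seifert circles and faces -/

/-- The position of the other passage of the crossing visited at position `k`. -/
def partnerIdx (a : KCode) (k : ℕ) : ℕ :=
  ((List.range a.length).filter
    (fun j => j != k && (a.getD j default).id == (a.getD k default).id)).headD 0

/-- Traversal of the diagram obtained by the oriented smoothing of every
classical crossing: from the arc entering passage `k+1` one exits along the
arc leaving the partner passage. -/
def seifNext (a : KCode) (k : ℕ) : ℕ := partnerIdx a ((k + 1) % a.length)

/-- A canonical representative of the Seifert circle through arc `k`. -/
def seifRep (a : KCode) (k : ℕ) : ℕ :=
  ((List.range a.length).map (fun t => (seifNext a)^[t] k)).foldr min k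

/-- The number of (virtual) Seifert circles: the number of cycles of the
oriented smoothing of all classical crossings.  A crossingless circle is a
single Seifert circle. -/
def seifertCount (a : KCode) : ℕ :=
  if a.length = 0 then 1 else ((List.range a.length).map (seifRep a)).dedup.length

/-- The counterclockwise-next edge-end around a crossing.  An edge-end is a
pair (position, isIn): the head (`isIn = true`) or the tail (`isIn = false`)
of an arc at the passage at that position. -/
def nextEnd (a : KCode) (e : ℕ × Bool) : ℕ × Bool :=
  let p := a.getD e.1 default
  (partnerIdx a e.1, if p.isOver == (p.sign == 1) then e.2 else !e.2)

/-- The edge-end at which a directed arc (a dart) arrives. -/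
def headEnd (a : KCode) (d : ℕ × Bool) : ℕ × Bool :=
  if d.2 then ((d.1 + 1) % a.length, true) else (d.1, false)

/-- The dart leaving along a given edge-end. -/
def dartFrom (a : KCode) (e : ℕ × Bool) : ℕ × Bool :=
  if e.2 then ((e.1 + a.length - 1) % a.length, false) else (e.1, true)

/-- The face-tracing successor of a dart. -/
def faceNext (a : KCode) (d : ℕ × Bool) : ℕ × Bool :=
  dartFrom a (nextEnd a (headEnd a d))

def encDart (d : ℕ × Bool) : ℕ := 2 * d.1 + (if d.2 then 1 else 0)

/-- A canonical representative of the face through a given dart. -/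
def faceRep (a : KCode) (d : ℕ × Bool) : ℕ :=
  ((List.range (2 * a.length)).map (fun t => encDart ((faceNext a)^[t] d))).foldr
    min (encDart d)

/-- The number of faces of the abstract (ribbon) diagram of a code. -/
def numFaces (a : KCode) : ℕ :=
  (((List.range a.length).flatMap (fun k => [(k, true), (k, false)])).map
    (faceRep a)).dedup.length

/-- A knot code is classical when its underlying abstract diagram is planar,
i.e. (by Euler's formula) when it has `n + 2` faces, `n` being the number of
crossings.  Classical knot diagrams are exactly the virtual knot diagrams
having a realization with no virtual crossings. -/
def IsClassical (a : KCode) : Prop := a = [] ∨ numFaces a = numCross a + 2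

/-! ## Flat diagrams -/

/-- A passage of a flat (no over/under information) virtual knot diagram:
`left = true` when the other strand crosses to the left, so that the affine
label increases by one. -/
structure FlatPassage where
  id : ℕ
  left : Bool
  deriving DecidableEq, Repr

instance : Inhabited FlatPassage := ⟨⟨0, false⟩⟩

/-- The label increment at a flat passage. -/
def FlatPassage.inc (p : FlatPassage) : ℤ := if p.left then 1 else -1

/-- A valid flat knot code: each crossing is traversed exactly twice, once
with increment `+1` and once with increment `-1`. -/
def ValidFlat (a : List FlatPassage) : Prop :=
  ∀ p ∈ a, (a.filter (fun q => q.id == p.id && q.left)).length = 1 ∧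
    (a.filter (fun q => q.id == p.id && !q.left)).length = 1

/-- An affine labeling of a flat knot diagram: `lab k` is the label of the arc
entering the `k`-th passage, and passing a crossing changes the label by the
increment of the passage. -/
def IsFlatLabeling (a : List FlatPassage) (lab : ℕ → ℤ) : Prop :=
  ∀ k, k < a.length → lab ((k + 1) % a.length) = lab k + (a.getD k default).inc


/-!
Label the arc entering each passage of a Gauss code by the sum of the increments of the
passages before it; for a valid code the two passages of a crossing have opposite increments,
so the labels close up around the circle, and the weight of a crossing is the label at its
over-passage minus the label at its under-passage minus its sign. Each classical Reidemeister
move replaces a few segments of the code by segments with the same total increment, so every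
untouched passage keeps its label. The crossing created by R1 has weight `0`, the two crossings
created by R2 have equal weights and opposite signs, and at each of the three crossings of R3
the label changes at the two passages cancel, because the order of each transposed pair is
tied to the signs. A change of base point shifts all labels by the same amount, and renamings
or reorderings of components change nothing.
-/

def Passage.partner (p : Passage) : Passage := ⟨p.id, !p.isOver, p.sign⟩

namespace Passage

lemma ext {p q : Passage} (hid : p.id = q.id) (hov : p.isOver = q.isOver)
    (hs : p.sign = q.sign) : p = q := by
  cases p; cases q; simp_all

@[simp] lemma partner_id (p : Passage) : p.partner.id = p.id := rfl
@[simp] lemma partner_isOver (p : Passage) : p.partner.isOver = !p.isOver := rfl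
@[simp] lemma partner_sign (p : Passage) : p.partner.sign = p.sign := rfl

@[simp] lemma partner_partner (p : Passage) : p.partner.partner = p := by
  simp [partner]

@[simp] lemma inc_partner (p : Passage) : p.partner.inc = -p.inc := by
  cases h : p.isOver <;> simp [inc, partner, h]

lemma partner_ne (p : Passage) : p.partner ≠ p := fun h => by
  simpa using congrArg Passage.isOver h

lemma partner_injective : Function.Injective Passage.partner :=
  Function.LeftInverse.injective partner_partner

end Passage

/-! ### Valid codes -/

section Valid

variable {a : KCode} {p q : Passage}

lemma ValidK.length_filter_eq_one (ha : ValidK a) (hp : p ∈ a) (o : Bool) :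
    (a.filter (fun q => q.id == p.id && q.isOver == o)).length = 1 := by
  obtain ⟨-, hover, hunder, -⟩ := ha p hp
  cases o
  · simpa using hunder
  · simpa using hover

lemma ValidK.eq_of_isOver_eq (ha : ValidK a) (hp : p ∈ a) (hq : q ∈ a) (hid : q.id = p.id)
    (hov : q.isOver = p.isOver) : q = p := by
  obtain ⟨x, hx⟩ := List.length_eq_one_iff.mp (ha.length_filter_eq_one hp p.isOver)
  have hpx : p ∈ [x] := hx ▸ List.mem_filter.mpr ⟨hp, by simp⟩
  have hqx : q ∈ [x] := hx ▸ List.mem_filter.mpr ⟨hq, by simp [hid, hov]⟩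
  simp_all

lemma ValidK.nodup (ha : ValidK a) : a.Nodup := by
  refine List.nodup_iff_count_le_one.mpr fun p => ?_
  by_cases hp : p ∈ a
  · rw [List.count_eq_countP, ← ha.length_filter_eq_one hp p.isOver,
      ← List.countP_eq_length_filter]
    exact List.countP_mono_left fun q _ h => by simp_all
  · simp [List.count_eq_zero_of_not_mem hp]

lemma ValidK.partner_mem (ha : ValidK a) (hp : p ∈ a) : p.partner ∈ a := by
  obtain ⟨x, hx⟩ := List.length_eq_one_iff.mp (ha.length_filter_eq_one hp (!p.isOver))
  obtain ⟨hxa, hxp⟩ := List.mem_filter.mp (hx ▸ List.mem_singleton_self x)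
  simp only [Bool.and_eq_true, beq_iff_eq] at hxp
  have hsign := (ha p hp).2.2.2 x hxa hxp.1
  rwa [Passage.ext (q := p.partner) hxp.1 hxp.2 hsign] at hxa

lemma ValidK.eq_or_eq_partner (ha : ValidK a) (hp : p ∈ a) (hq : q ∈ a) (hid : q.id = p.id) :
    q = p ∨ q = p.partner := by
  by_cases hov : q.isOver = p.isOver
  · exact Or.inl (ha.eq_of_isOver_eq hp hq hid hov)
  · exact Or.inr (Passage.ext (q := p.partner) hid (by simpa [Bool.eq_not_iff] using hov)
      ((ha p hp).2.2.2 q hq hid))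

lemma validK_of_nodup (hnd : a.Nodup) (h : ∀ p ∈ a, (p.sign = 1 ∨ p.sign = -1) ∧
    p.partner ∈ a ∧ ∀ q ∈ a, q.id = p.id → q = p ∨ q = p.partner) : ValidK a := by
  intro p hp
  obtain ⟨hs, hpartner, hids⟩ := h p hp
  have hlen : ∀ o, (a.filter (fun q => q.id == p.id && q.isOver == o)).length = 1 := by
    intro o
    set x := if p.isOver = o then p else p.partner
    have : (a.filter (fun q => q.id == p.id && q.isOver == o)).Perm [x] := by
      refine (List.perm_ext_iff_of_nodup (hnd.filter _) (List.nodup_singleton x)).mpr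
        fun q => ?_
      simp only [List.mem_filter, Bool.and_eq_true, beq_iff_eq, List.mem_singleton]
      constructor
      · rintro ⟨hq, hid, hov⟩
        rcases hids q hq hid with rfl | rfl <;> simp_all [x]
      · rintro rfl
        by_cases h : p.isOver = o <;> cases o <;> simp_all [x]
    exact this.length_eq
  refine ⟨hs, by simpa using hlen true, by simpa using hlen false, fun q hq hid => ?_⟩
  rcases hids q hq hid with rfl | rfl <;> rfl

lemma validK_iff : ValidK a ↔ a.Nodup ∧ ∀ p ∈ a, (p.sign = 1 ∨ p.sign = -1) ∧
    p.partner ∈ a ∧ ∀ q ∈ a, q.id = p.id → q = p ∨ q = p.partner :=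
  ⟨fun ha => ⟨ha.nodup, fun _ hp =>
    ⟨(ha _ hp).1, ha.partner_mem hp, fun _ hq => ha.eq_or_eq_partner hp hq⟩⟩,
   fun h => validK_of_nodup h.1 h.2⟩

lemma List.Perm.validK_iff {b : KCode} (h : a.Perm b) : ValidK a ↔ ValidK b := by
  simp only [_root_.validK_iff, h.nodup_iff, h.mem_iff]

lemma ValidK.sgn_eq (ha : ValidK a) (hp : p ∈ a) : sgn a p.id = p.sign := by
  obtain ⟨q, hfind⟩ : ∃ q, a.find? (fun q => q.id == p.id) = some q :=
    Option.ne_none_iff_exists'.mp (List.find?_eq_none.not.mpr fun h => by simpa using h p hp)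
  have hq : q.id = p.id := by simpa using List.find?_some hfind
  rw [sgn, hfind]
  rcases ha.eq_or_eq_partner hp (List.mem_of_find?_eq_some hfind) hq with rfl | rfl <;> rfl

lemma mem_crossIds {n : ℕ} : n ∈ crossIds a ↔ ∃ p ∈ a, p.id = n := by
  simp [crossIds]

end Valid

/-! ### Labels and weights -/

def incSum (a : KCode) : ℤ := (a.map Passage.inc).sum

@[simp] lemma incSum_nil : incSum [] = 0 := rfl

@[simp] lemma incSum_cons (p : Passage) (a : KCode) : incSum (p :: a) = p.inc + incSum a := by
  simp [incSum]

@[simp] lemma incSum_append (a b : KCode) : incSum (a ++ b) = incSum a + incSum b := by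
  simp [incSum]

@[simp] lemma incSum_map_partner (a : KCode) : incSum (a.map Passage.partner) = -incSum a := by
  induction a with
  | nil => rfl
  | cons p a ih => simp [ih]; ring

lemma List.Perm.incSum_eq {a b : KCode} (h : a.Perm b) : incSum a = incSum b :=
  (h.map _).sum_eq

lemma ValidK.incSum_eq_zero {a : KCode} (ha : ValidK a) : incSum a = 0 := by
  have hperm : (a.map Passage.partner).Perm a := by
    refine (List.perm_ext_iff_of_nodup (ha.nodup.map Passage.partner_injective) ha.nodup).mpr
      fun q => ⟨fun hq => ?_, fun hq => List.mem_map.mpr ⟨q.partner, ha.partner_mem hq, by simp⟩⟩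
    obtain ⟨p, hp, rfl⟩ := List.mem_map.mp hq
    exact ha.partner_mem hp
  linarith [incSum_map_partner a, hperm.incSum_eq]

def labeledPassages : KCode → List (Passage × ℤ)
  | [] => []
  | p :: l => (p, 0) :: (labeledPassages l).map (Prod.map id (p.inc + ·))

section LabeledPassages

variable {a x y : KCode} {q : Passage} {ℓ : ℤ}

@[simp] lemma labelAt_zero (a : KCode) : labelAt a 0 = 0 := by
  simp [labelAt]

@[simp] lemma labelAt_cons_succ (p : Passage) (a : KCode) (k : ℕ) :
    labelAt (p :: a) (k + 1) = p.inc + labelAt a k := by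
  simp [labelAt]

lemma mem_labeledPassages_iff :
    (q, ℓ) ∈ labeledPassages a ↔ ∃ k, ∃ hk : k < a.length, a[k] = q ∧ labelAt a k = ℓ := by
  induction a generalizing ℓ with
  | nil => simp [labeledPassages]
  | cons p a ih =>
    simp only [labeledPassages, List.mem_cons, List.mem_map, Prod.mk.injEq]
    constructor
    · rintro (⟨rfl, rfl⟩ | ⟨⟨q', ℓ'⟩, h, he⟩)
      · exact ⟨0, by simp, rfl, by simp⟩
      · simp only [Prod.map, id, Prod.mk.injEq] at he
        obtain ⟨rfl, rfl⟩ := he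
        obtain ⟨k, hk, hq, rfl⟩ := ih.mp h
        exact ⟨k + 1, by simpa using hk, hq, labelAt_cons_succ p a k⟩
    · rintro ⟨_ | k, hk, rfl, rfl⟩
      · exact Or.inl ⟨rfl, by simp⟩
      · exact Or.inr ⟨_, ih.mpr ⟨k, by simpa using hk, rfl, rfl⟩,
          by simp [Prod.map, labelAt_cons_succ]⟩

lemma map_fst_labeledPassages (a : KCode) : (labeledPassages a).map Prod.fst = a := by
  induction a with
  | nil => rfl
  | cons p a ih => simp [labeledPassages, Function.comp_def, Prod.map, ih]

lemma mem_of_mem_labeledPassages (h : (q, ℓ) ∈ labeledPassages a) : q ∈ a :=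
  map_fst_labeledPassages a ▸ List.mem_map_of_mem (f := Prod.fst) h

lemma exists_mem_labeledPassages (h : q ∈ a) : ∃ ℓ, (q, ℓ) ∈ labeledPassages a := by
  rw [← map_fst_labeledPassages a] at h
  obtain ⟨⟨q, ℓ⟩, hq, rfl⟩ := List.mem_map.mp h
  exact ⟨ℓ, hq⟩

lemma labeledPassages_append (x y : KCode) : labeledPassages (x ++ y) =
    labeledPassages x ++ (labeledPassages y).map (Prod.map id (incSum x + ·)) := by
  induction x with
  | nil => exact (List.map_id'' (fun _ => by simp [Prod.map]) _).symm
  | cons p x ih => simp [labeledPassages, ih, Function.comp_def, add_assoc]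

lemma mem_labeledPassages_append :
    (q, ℓ) ∈ labeledPassages (x ++ y) ↔
      (q, ℓ) ∈ labeledPassages x ∨ (q, ℓ - incSum x) ∈ labeledPassages y := by
  rw [labeledPassages_append, List.mem_append, List.mem_map]
  constructor
  · rintro (h | ⟨⟨q', ℓ'⟩, h, he⟩)
    · exact Or.inl h
    · simp only [Prod.map, id, Prod.mk.injEq] at he
      obtain ⟨rfl, rfl⟩ := he
      exact Or.inr (by rwa [add_sub_cancel_left])
  · rintro (h | h)
    · exact Or.inl h
    · exact Or.inr ⟨_, h, by simp [Prod.map]⟩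

lemma mem_labeledPassages_append_left {z : Passage × ℤ} (h : z ∈ labeledPassages x) :
    z ∈ labeledPassages (x ++ y) := by
  rw [labeledPassages_append]
  exact List.mem_append_left _ h

lemma mem_labeledPassages_append_right (h : (q, ℓ) ∈ labeledPassages y) :
    (q, incSum x + ℓ) ∈ labeledPassages (x ++ y) :=
  mem_labeledPassages_append.mpr (Or.inr (by rwa [add_sub_cancel_left]))

@[simp] lemma labeledPassages_pair (p q : Passage) :
    labeledPassages [p, q] = [(p, 0), (q, p.inc)] := by
  simp [labeledPassages, Prod.map]

lemma mem_labeledPassages_pair {p q : Passage} :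
    (p, 0) ∈ labeledPassages [p, q] ∧ (q, p.inc) ∈ labeledPassages [p, q] := by
  simp

end LabeledPassages

lemma List.Nodup.findIdx_eq_of_unique {α : Type*} {l : List α} (hl : l.Nodup) {P : α → Bool}
    {k : ℕ} (hk : k < l.length) (hP : P l[k]) (huniq : ∀ x ∈ l, P x → x = l[k]) :
    l.findIdx P = k :=
  (List.findIdx_eq hk).mpr ⟨hP, fun j hjk => Bool.eq_false_iff.mpr fun hj =>
    absurd (hl.getElem_inj_iff.mp (huniq _ (List.getElem_mem _) hj)) (by omega)⟩

section Weights

variable {a b : KCode} {p : Passage}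

lemma ValidK.wt_eq_of_isOver (ha : ValidK a) (hp : p.isOver) {ℓ ℓ' : ℤ}
    (h : (p, ℓ) ∈ labeledPassages a) (h' : (p.partner, ℓ') ∈ labeledPassages a) :
    wt a p.id = ℓ - ℓ' - p.sign := by
  obtain ⟨k, hk, hpk, rfl⟩ := mem_labeledPassages_iff.mp h
  obtain ⟨k', hk', hpk', rfl⟩ := mem_labeledPassages_iff.mp h'
  have hpa : p ∈ a := hpk ▸ List.getElem_mem hk
  have hover : overPos a p.id = k :=
    ha.nodup.findIdx_eq_of_unique hk (by simp [hpk, hp]) fun x hx hPx => by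
      simp only [Bool.and_eq_true, beq_iff_eq] at hPx
      rw [hpk]; exact ha.eq_of_isOver_eq hpa hx hPx.1 (by simp [hPx.2, hp])
  have hunder : underPos a p.id = k' :=
    ha.nodup.findIdx_eq_of_unique hk' (by simp [hpk', hp]) fun x hx hPx => by
      simp only [Bool.and_eq_true, beq_iff_eq, Bool.not_eq_true'] at hPx
      rw [hpk']; exact ha.eq_of_isOver_eq (ha.partner_mem hpa) hx hPx.1 (by simp [hPx.2, hp])
  rw [wt, hover, hunder, ha.sgn_eq hpa]

lemma ValidK.wt_eq (ha : ValidK a) {ℓ ℓ' : ℤ} (h : (p, ℓ) ∈ labeledPassages a)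
    (h' : (p.partner, ℓ') ∈ labeledPassages a) :
    wt a p.id = (if p.isOver then ℓ - ℓ' else ℓ' - ℓ) - p.sign := by
  cases hp : p.isOver
  · simpa using ha.wt_eq_of_isOver (p := p.partner) (by simp [hp]) h' (by simpa using h)
  · simpa using ha.wt_eq_of_isOver hp h h'

noncomputable def crossTerm (a : KCode) (n : ℕ) : LaurentPolynomial ℤ :=
  C (sgn a n) * (T (wt a n) - 1)

lemma ValidK.crossIds_perm (ha : ValidK a) :
    (crossIds a).Perm ((a.filter (·.isOver)).map Passage.id) := by
  refine (List.perm_ext_iff_of_nodup (List.nodup_dedup _)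
    ((ha.nodup.filter _).map_on fun x hx y hy hxy => ?_)).mpr fun n => ?_
  · obtain ⟨hx, hxo⟩ := List.mem_filter.mp hx
    obtain ⟨hy, hyo⟩ := List.mem_filter.mp hy
    exact ha.eq_of_isOver_eq hy hx hxy (by simp_all)
  · simp only [List.mem_dedup, List.mem_map, List.mem_filter]
    constructor
    · rintro ⟨p, hp, rfl⟩
      cases hpo : p.isOver
      · exact ⟨p.partner, ⟨ha.partner_mem hp, by simp [hpo]⟩, rfl⟩
      · exact ⟨p, ⟨hp, hpo⟩, rfl⟩
    · rintro ⟨p, ⟨hp, -⟩, rfl⟩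
      exact ⟨p, hp, rfl⟩

lemma ValidK.affP_eq_sum_filter_isOver (ha : ValidK a) :
    affP a = ((a.filter (·.isOver)).map (fun p => crossTerm a p.id)).sum := by
  rw [affP, (ha.crossIds_perm.map _).sum_eq, List.map_map]
  rfl

lemma affP_eq_add_of_perm {k : KCode} (ha : ValidK a) (hb : ValidK b) (hperm : b.Perm (a ++ k))
    (hold : ∀ p ∈ a, p.isOver → crossTerm b p.id = crossTerm a p.id) :
    affP b = affP a + ((k.filter (·.isOver)).map (fun p => crossTerm b p.id)).sum := by
  rw [hb.affP_eq_sum_filter_isOver, ha.affP_eq_sum_filter_isOver,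
    ((hperm.filter _).map _).sum_eq, List.filter_append, List.map_append, List.sum_append]
  congr 1
  refine congrArg List.sum (List.map_congr_left fun p hp => ?_)
  obtain ⟨hp, hpo⟩ := List.mem_filter.mp hp
  exact hold p hp hpo

lemma crossTerm_eq_of_label_sub_eq (ha : ValidK a) (hb : ValidK b) {ℓ₁ ℓ₂ ℓ₁' ℓ₂' : ℤ}
    (h₁ : (p, ℓ₁) ∈ labeledPassages a) (h₂ : (p.partner, ℓ₂) ∈ labeledPassages a)
    (h₁' : (p, ℓ₁') ∈ labeledPassages b) (h₂' : (p.partner, ℓ₂') ∈ labeledPassages b)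
    (hsub : ℓ₁' - ℓ₂' = ℓ₁ - ℓ₂) :
    crossTerm b p.id = crossTerm a p.id := by
  have hsub' : ℓ₂' - ℓ₁' = ℓ₂ - ℓ₁ := by linarith
  rw [crossTerm, crossTerm, ha.sgn_eq (mem_of_mem_labeledPassages h₁),
    hb.sgn_eq (mem_of_mem_labeledPassages h₁'), ha.wt_eq h₁ h₂, hb.wt_eq h₁' h₂', hsub, hsub']

lemma crossTerm_eq_of_shift (ha : ValidK a) (hb : ValidK b) (hp : p ∈ a) (d : ℤ)
    (hshift : ∀ q ℓ, q.id = p.id → (q, ℓ) ∈ labeledPassages a →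
      (q, ℓ + d) ∈ labeledPassages b) :
    crossTerm b p.id = crossTerm a p.id := by
  obtain ⟨ℓ, h⟩ := exists_mem_labeledPassages hp
  obtain ⟨ℓ', h'⟩ := exists_mem_labeledPassages (ha.partner_mem hp)
  exact crossTerm_eq_of_label_sub_eq ha hb h h' (hshift _ _ rfl h) (hshift _ _ rfl h')
    (by ring)

end Weights

/-! ### Re-encodings -/

lemma affP_append_comm {x y : KCode} (h : ValidK (x ++ y)) : affP (y ++ x) = affP (x ++ y) := by
  have hv := List.perm_append_comm.validK_iff.mp h
  have hsum : incSum x + incSum y = 0 := by simpa using h.incSum_eq_zero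
  have hshift : ∀ q ℓ, (q, ℓ) ∈ labeledPassages (x ++ y) →
      (q, ℓ + incSum y) ∈ labeledPassages (y ++ x) := by
    intro q ℓ hq
    rcases mem_labeledPassages_append.mp hq with hq | hq
    · exact mem_labeledPassages_append.mpr (Or.inr (by simpa using hq))
    · exact mem_labeledPassages_append.mpr (Or.inl (by convert hq using 2; linarith))
  rw [affP_eq_add_of_perm (k := []) h hv (by simpa using List.perm_append_comm)
    fun p hp _ => crossTerm_eq_of_shift h hv hp _ fun q ℓ _ => hshift q ℓ]
  simp

def Passage.rename (f : ℕ → ℕ) (p : Passage) : Passage := { p with id := f p.id }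

@[simp] lemma Passage.rename_id (f : ℕ → ℕ) (p : Passage) : (p.rename f).id = f p.id := rfl

@[simp] lemma Passage.rename_sign (f : ℕ → ℕ) (p : Passage) : (p.rename f).sign = p.sign := rfl

lemma Passage.rename_injective {f : ℕ → ℕ} (hf : Function.Injective f) :
    Function.Injective (Passage.rename f) := by
  rintro ⟨i, o, s⟩ ⟨i', o', s'⟩ h
  simp only [rename, mk.injEq] at h
  simp [hf h.1, h.2]

lemma relabel_eq_map (f : ℕ → ℕ) (a : KCode) : relabel f a = a.map (Passage.rename f) := rfl

lemma labeledPassages_relabel (f : ℕ → ℕ) (a : KCode) :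
    labeledPassages (relabel f a) = (labeledPassages a).map (Prod.map (Passage.rename f) id) := by
  induction a with
  | nil => rfl
  | cons p a ih =>
    simp only [relabel_eq_map, List.map_cons, labeledPassages] at ih ⊢
    simp [ih, Function.comp_def, Prod.map, Passage.rename, Passage.inc]
    exact fun _ _ _ => rfl

lemma validK_relabel {f : ℕ → ℕ} (hf : Function.Injective f) {a : KCode} :
    ValidK (relabel f a) ↔ ValidK a := by
  have hinj := Passage.rename_injective hf
  have hpartner : ∀ p : Passage, (p.rename f).partner = p.partner.rename f := fun _ => rfl
  simp only [validK_iff, relabel_eq_map, List.nodup_map_iff hinj, List.forall_mem_map,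
    hpartner, List.mem_map_of_injective hinj, Passage.rename_id, Passage.rename_sign, hf.eq_iff,
    hinj.eq_iff]

lemma affP_relabel {f : ℕ → ℕ} (hf : Function.Injective f) {a : KCode} (ha : ValidK a) :
    affP (relabel f a) = affP a := by
  have hb : ValidK (a.map (Passage.rename f)) := (validK_relabel hf).mpr ha
  rw [relabel_eq_map, hb.affP_eq_sum_filter_isOver, ha.affP_eq_sum_filter_isOver,
    List.filter_map, List.map_map]
  refine congrArg List.sum (List.map_congr_left fun p hp => ?_)
  obtain ⟨hp, -⟩ := List.mem_filter.mp hp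
  obtain ⟨ℓ, h⟩ := exists_mem_labeledPassages hp
  obtain ⟨ℓ', h'⟩ := exists_mem_labeledPassages (ha.partner_mem hp)
  have hmem : ∀ {q ℓ}, (q, ℓ) ∈ labeledPassages a →
      (q.rename f, ℓ) ∈ labeledPassages (a.map (Passage.rename f)) := fun hq => by
    rw [← relabel_eq_map, labeledPassages_relabel]
    exact List.mem_map_of_mem (f := Prod.map (Passage.rename f) id) hq
  have h₁ := hmem h
  have h₂ : ((p.rename f).partner, ℓ') ∈ _ := hmem h'
  show crossTerm _ (p.rename f).id = crossTerm a p.id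
  rw [crossTerm, crossTerm, hb.sgn_eq (mem_of_mem_labeledPassages h₁), hb.wt_eq h₁ h₂,
    ha.sgn_eq hp, ha.wt_eq h h']
  rfl

/-! ### Segment replacement -/

section Replacement

variable {c c' : KCode} {segs segs' : List (KCode × KCode)}

lemma ReplC.perm (h : ReplC c c' segs segs') :
    (c' ++ (segs.map Prod.fst).flatten ++ (segs'.map Prod.snd).flatten).Perm
      (c ++ (segs.map Prod.snd).flatten ++ (segs'.map Prod.fst).flatten) := by
  induction h with
  | nil c segs =>
    rw [List.append_assoc, List.append_assoc]
    exact List.perm_append_comm.append_left c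
  | cons x u v h ih =>
    simp only [List.map_cons, List.flatten_cons, ← Multiset.coe_eq_coe,
      ← Multiset.coe_add] at ih ⊢
    have := congrArg (· + ((x : Multiset Passage) + u + v)) ih
    convert this using 1 <;> abel

lemma ReplC.perm_of_forall_perm (h : ReplC c c' segs segs') (hp : ∀ r ∈ segs, r.2.Perm r.1) :
    c'.Perm c := by
  induction h with
  | nil => rfl
  | cons x u v h ih =>
    simp only [List.forall_mem_cons] at hp
    exact ((List.Perm.refl x).append hp.1).append (ih hp.2)

lemma ReplC.mem_labeledPassages (h : ReplC c c' segs segs')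
    (hS : ∀ r ∈ segs, incSum r.1 = incSum r.2) {q : Passage} {ℓ : ℤ}
    (hq : (q, ℓ) ∈ labeledPassages c) (hout : ∀ r ∈ segs, q ∉ r.1) :
    (q, ℓ) ∈ labeledPassages c' := by
  induction h generalizing ℓ with
  | nil => exact hq
  | cons x u v h ih =>
    simp only [List.forall_mem_cons] at hS hout
    rcases mem_labeledPassages_append.mp hq with hq | hq
    · rcases mem_labeledPassages_append.mp hq with hq | hq
      · exact mem_labeledPassages_append_left (mem_labeledPassages_append_left hq)
      · exact absurd (mem_of_mem_labeledPassages hq) hout.1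
    · have := mem_labeledPassages_append_right (x := x ++ v) (ih hS.2 hq hout.2)
      rwa [incSum_append, incSum_append, ← hS.1, add_sub_cancel] at this

lemma ReplC.exists_slot (h : ReplC c c' segs segs') (hS : ∀ r ∈ segs, incSum r.1 = incSum r.2)
    {r : KCode × KCode} (hr : r ∈ segs) (hr' : r ∉ segs') :
    ∃ ℓ, (∀ z ∈ labeledPassages r.1, (z.1, ℓ + z.2) ∈ labeledPassages c) ∧
      (∀ z ∈ labeledPassages r.2, (z.1, ℓ + z.2) ∈ labeledPassages c') := by
  induction h with
  | nil => exact absurd hr hr'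
  | cons x u v h ih =>
    simp only [List.forall_mem_cons] at hS
    by_cases hru : r = (u, v)
    · subst hru
      exact ⟨incSum x, fun z hz => mem_labeledPassages_append_left
        (mem_labeledPassages_append_right hz), fun z hz => mem_labeledPassages_append_left
        (mem_labeledPassages_append_right hz)⟩
    · obtain ⟨ℓ, h₁, h₂⟩ := ih hS.2 (List.mem_of_ne_of_mem hru hr) hr'
      refine ⟨incSum (x ++ u) + ℓ, fun z hz => ?_, fun z hz => ?_⟩
      · simpa [add_assoc] using mem_labeledPassages_append_right (x := x ++ u) (h₁ z hz)
      · simpa [add_assoc, hS.1] using mem_labeledPassages_append_right (x := x ++ v) (h₂ z hz)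

lemma mem_pairOf {t : Bool} {p q r : Passage} : r ∈ pairOf t p q ↔ r = p ∨ r = q := by
  cases t <;> simp [pairOf, or_comm]

lemma pairOf_not_perm (t : Bool) (p q : Passage) : (pairOf (!t) p q).Perm (pairOf t p q) := by
  cases t <;> exact List.Perm.swap _ _ _

lemma ReplC.exists_pairOf_slot (h : ReplC c c' segs [])
    (hS : ∀ r ∈ segs, incSum r.1 = incSum r.2) {t : Bool} {p q : Passage}
    (hr : (pairOf t p q, pairOf (!t) p q) ∈ segs) :
    ∃ ℓ, (p, ℓ + if t then 0 else q.inc) ∈ labeledPassages c ∧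
      (q, ℓ + if t then p.inc else 0) ∈ labeledPassages c ∧
      (p, ℓ + if t then q.inc else 0) ∈ labeledPassages c' ∧
      (q, ℓ + if t then 0 else p.inc) ∈ labeledPassages c' := by
  obtain ⟨ℓ, h₁, h₂⟩ := h.exists_slot hS hr List.not_mem_nil
  refine ⟨ℓ, ?_⟩
  cases t
  · exact ⟨h₁ _ mem_labeledPassages_pair.2, by simpa using h₁ _ mem_labeledPassages_pair.1,
      by simpa using h₂ _ mem_labeledPassages_pair.1, h₂ _ mem_labeledPassages_pair.2⟩
  · exact ⟨by simpa using h₁ _ mem_labeledPassages_pair.1, h₁ _ mem_labeledPassages_pair.2,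
      h₂ _ mem_labeledPassages_pair.2, by simpa using h₂ _ mem_labeledPassages_pair.1⟩

end Replacement

lemma validK_append_iff {a k : KCode} (hdisj : ∀ p ∈ a, ∀ q ∈ k, p.id ≠ q.id)
    (hk : ValidK k) : ValidK (a ++ k) ↔ ValidK a := by
  obtain ⟨hkn, hkv⟩ := validK_iff.mp hk
  rw [validK_iff, validK_iff, List.nodup_append]
  constructor
  · rintro ⟨⟨hna, -, -⟩, hv⟩
    refine ⟨hna, fun p hp => ?_⟩
    obtain ⟨hs, hpart, hid⟩ := hv p (List.mem_append_left _ hp)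
    refine ⟨hs, ?_, fun q hq => hid q (List.mem_append_left _ hq)⟩
    rcases List.mem_append.mp hpart with h | h
    · exact h
    · exact absurd p.partner_id.symm (hdisj p hp _ h)
  · rintro ⟨hna, hav⟩
    refine ⟨⟨hna, hkn, fun p hp q hq hpq => hdisj p hp q hq (hpq ▸ rfl)⟩, fun p hp => ?_⟩
    rcases List.mem_append.mp hp with hp | hp
    · obtain ⟨hs, hpart, hid⟩ := hav p hp
      refine ⟨hs, List.mem_append_left _ hpart, fun q hq hqid => ?_⟩
      rcases List.mem_append.mp hq with hq | hq
      · exact hid q hq hqid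
      · exact absurd hqid.symm (hdisj p hp q hq)
    · obtain ⟨hs, hpart, hid⟩ := hkv p hp
      refine ⟨hs, List.mem_append_right _ hpart, fun q hq hqid => ?_⟩
      rcases List.mem_append.mp hq with hq | hq
      · exact absurd hqid (hdisj q hq p hp)
      · exact hid q hq hqid

lemma validK_append_map_partner {l : KCode} (hl : (l.map Passage.id).Nodup)
    (hs : ∀ p ∈ l, p.sign = 1 ∨ p.sign = -1) : ValidK (l ++ l.map Passage.partner) := by
  have hinj := List.inj_on_of_nodup_map hl
  have hne : ∀ p ∈ l, ∀ q ∈ l, p ≠ q.partner := fun p hp q hq h =>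
    q.partner_ne (h ▸ hinj hp hq (by simp [h]))
  refine validK_iff.mpr ⟨List.nodup_append.mpr ⟨hl.of_map _,
    (List.nodup_map_iff Passage.partner_injective).mpr (hl.of_map _), ?_⟩, fun p hp => ?_⟩
  · rintro p hp _ hq' rfl
    obtain ⟨q, hq, rfl⟩ := List.mem_map.mp hq'
    exact hne _ hp q hq rfl
  · simp only [List.mem_append, List.mem_map] at hp ⊢
    rcases hp with hp | ⟨p, hp, rfl⟩
    · refine ⟨hs p hp, Or.inr ⟨p, hp, rfl⟩, fun q hq hqid => ?_⟩
      rcases hq with hq | ⟨q, hq, rfl⟩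
      · exact Or.inl (hinj hq hp hqid)
      · exact Or.inr (by rw [hinj hq hp hqid])
    · refine ⟨hs p hp, Or.inl (by simpa using hp), fun q hq hqid => ?_⟩
      rcases hq with hq | ⟨q, hq, rfl⟩
      · exact Or.inr (by rw [hinj hq hp hqid, Passage.partner_partner])
      · exact Or.inl (by rw [hinj hq hp hqid])

/-! ### Reidemeister moves -/

open Classical in
noncomputable def validAffP (c : KCode) : Option (LaurentPolynomial ℤ) :=
  if ValidK c then some (affP c) else none

lemma validAffP_eq_of_iff {c c' : KCode} (hv : ValidK c' ↔ ValidK c)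
    (h : ValidK c → affP c' = affP c) : validAffP c' = validAffP c := by
  by_cases hc : ValidK c
  · simp [validAffP, hc, hv.mpr hc, h hc]
  · simp [validAffP, hc, mt hv.mp hc]

lemma ReplC.validAffP_r1 {c c' : KCode} {p : Passage}
    (h : ReplC c c' [([], [p, p.partner])] []) (hs : p.sign = 1 ∨ p.sign = -1)
    (hp : p.id ∉ crossIds c) : validAffP c' = validAffP c := by
  have hperm : c'.Perm (c ++ [p, p.partner]) := by simpa using h.perm
  have hdisj : ∀ q ∈ c, ∀ r ∈ [p, p.partner], q.id ≠ r.id := by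
    intro q hq r hr hqr
    have hr : r.id = p.id := by rcases List.mem_pair.mp hr with rfl | rfl <;> rfl
    exact hp (mem_crossIds.mpr ⟨q, hq, hqr.trans hr⟩)
  have hkink : ValidK [p, p.partner] :=
    validK_append_map_partner (l := [p]) (by simp) (by simpa using hs)
  have hvalid : ValidK c' ↔ ValidK c := hperm.validK_iff.trans (validK_append_iff hdisj hkink)
  refine validAffP_eq_of_iff hvalid fun hc => ?_
  have hc' := hvalid.mpr hc
  have hS : ∀ r ∈ [(([] : KCode), [p, p.partner])], incSum r.1 = incSum r.2 := by simp
  obtain ⟨ℓ, -, hslot⟩ := h.exists_slot hS (List.mem_singleton_self _) List.not_mem_nil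
  have hw := hc'.wt_eq (by simpa only [add_zero] using hslot _ mem_labeledPassages_pair.1)
    (hslot _ mem_labeledPassages_pair.2)
  rw [affP_eq_add_of_perm hc hc' hperm fun q hq _ => crossTerm_eq_of_shift hc hc' hq 0
    fun r ℓ _ hr => by simpa using h.mem_labeledPassages hS hr (by simp)]
  cases ho : p.isOver <;> simp [ho, crossTerm, hw, Passage.inc]

lemma crossTerm_r2_eq_neg {c : KCode} (hc : ValidK c) {i j : ℕ} {o ord : Bool} {s ℓ₁ ℓ₂ : ℤ}
    (hA : ∀ z ∈ labeledPassages [⟨i, o, s⟩, ⟨j, o, -s⟩], (z.1, ℓ₁ + z.2) ∈ labeledPassages c)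
    (hB : ∀ z ∈ labeledPassages
      (if ord then [⟨j, !o, -s⟩, ⟨i, !o, s⟩] else [⟨i, !o, s⟩, ⟨j, !o, -s⟩]),
      (z.1, ℓ₂ + z.2) ∈ labeledPassages c) :
    crossTerm c j = -crossTerm c i := by
  have hi₁ : (⟨i, o, s⟩, ℓ₁) ∈ labeledPassages c := by
    simpa only [add_zero] using hA _ mem_labeledPassages_pair.1
  have hj₁ : (⟨j, o, -s⟩, ℓ₁ + Passage.inc ⟨i, o, s⟩) ∈ labeledPassages c :=
    hA _ mem_labeledPassages_pair.2
  -- whatever the orientation of the second strand, its labels at `i` and `j` differ by the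
  -- increment of the first strand at `i`
  obtain ⟨ℓi, ℓj, hi₂, hj₂, hℓ⟩ : ∃ ℓi ℓj, (⟨i, !o, s⟩, ℓi) ∈ labeledPassages c ∧
      (⟨j, !o, -s⟩, ℓj) ∈ labeledPassages c ∧ ℓi - ℓj = Passage.inc ⟨i, o, s⟩ := by
    cases ord
    · refine ⟨_, _, by simpa only [add_zero] using hB _ mem_labeledPassages_pair.1,
        hB _ mem_labeledPassages_pair.2, ?_⟩
      cases o <;> simp [Passage.inc]
    · refine ⟨_, _, hB _ mem_labeledPassages_pair.2,
        by simpa only [add_zero] using hB _ mem_labeledPassages_pair.1, ?_⟩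
      cases o <;> simp [Passage.inc]
  have hwt : wt c j = wt c i := by
    rw [show j = (⟨j, o, -s⟩ : Passage).id from rfl, hc.wt_eq hj₁ hj₂,
      show i = (⟨i, o, s⟩ : Passage).id from rfl, hc.wt_eq hi₁ hi₂]
    cases o <;> simp [Passage.inc] at hℓ ⊢ <;> linarith
  rw [crossTerm, crossTerm, hwt, show j = (⟨j, o, -s⟩ : Passage).id from rfl,
    hc.sgn_eq (mem_of_mem_labeledPassages hj₁), show i = (⟨i, o, s⟩ : Passage).id from rfl,
    hc.sgn_eq (mem_of_mem_labeledPassages hi₁), map_neg]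
  ring

lemma ReplC.validAffP_r2 {c c' : KCode} {i j : ℕ} {o ord : Bool} {s : ℤ}
    (h : ReplC c c' [([], [⟨i, o, s⟩, ⟨j, o, -s⟩]),
      ([], if ord then [⟨j, !o, -s⟩, ⟨i, !o, s⟩] else [⟨i, !o, s⟩, ⟨j, !o, -s⟩])] [])
    (hs : s = 1 ∨ s = -1) (hij : i ≠ j) (hi : i ∉ crossIds c) (hj : j ∉ crossIds c) :
    validAffP c' = validAffP c := by
  set A : KCode := [⟨i, o, s⟩, ⟨j, o, -s⟩]
  set B : KCode := if ord then [⟨j, !o, -s⟩, ⟨i, !o, s⟩] else [⟨i, !o, s⟩, ⟨j, !o, -s⟩]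
  have hperm : c'.Perm (c ++ (A ++ B)) := by simpa using h.perm
  have hnew : ValidK (A ++ B) := by
    refine List.Perm.validK_iff ?_ |>.mp
      (validK_append_map_partner (l := A) (by simp [A, hij]) (by simp [A]; omega))
    cases ord
    · rfl
    · exact (List.Perm.swap _ _ _).append_left A
  have hdisj : ∀ q ∈ c, ∀ r ∈ A ++ B, q.id ≠ r.id := by
    intro q hq r hr hqr
    have hr : r.id = i ∨ r.id = j := by
      cases ord <;> simp [A, B] at hr <;> rcases hr with rfl | rfl | rfl | rfl <;> simp
    rcases hr with hr | hr
    · exact hi (mem_crossIds.mpr ⟨q, hq, hqr.trans hr⟩)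
    · exact hj (mem_crossIds.mpr ⟨q, hq, hqr.trans hr⟩)
  have hvalid : ValidK c' ↔ ValidK c := hperm.validK_iff.trans (validK_append_iff hdisj hnew)
  refine validAffP_eq_of_iff hvalid fun hc => ?_
  have hc' := hvalid.mpr hc
  have hS : ∀ r ∈ [(([] : KCode), A), ([], B)], incSum r.1 = incSum r.2 := by
    cases o <;> cases ord <;> simp [A, B, Passage.inc]
  obtain ⟨ℓ₁, -, hA⟩ := h.exists_slot hS (r := ([], A)) (by simp) List.not_mem_nil
  obtain ⟨ℓ₂, -, hB⟩ := h.exists_slot hS (r := ([], B)) (by simp) List.not_mem_nil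
  have hcancel := crossTerm_r2_eq_neg hc' hA hB
  rw [affP_eq_add_of_perm hc hc' hperm fun q hq _ => crossTerm_eq_of_shift hc hc' hq 0
    fun r ℓ _ hr => by simpa using h.mem_labeledPassages hS hr (by simp)]
  cases o <;> cases ord <;> simp [A, B, hcancel]

def r3Pairs (i j k : ℕ) (si sj sk : ℤ) (t : Bool) : List (KCode × KCode) :=
  [(pairOf t ⟨i, true, si⟩ ⟨j, true, sj⟩, pairOf (!t) ⟨i, true, si⟩ ⟨j, true, sj⟩),
   (pairOf (t == (sj * sk == 1)) ⟨i, false, si⟩ ⟨k, true, sk⟩,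
    pairOf (!(t == (sj * sk == 1))) ⟨i, false, si⟩ ⟨k, true, sk⟩),
   (pairOf (t == (si * sk == 1)) ⟨j, false, sj⟩ ⟨k, false, sk⟩,
    pairOf (!(t == (si * sk == 1))) ⟨j, false, sj⟩ ⟨k, false, sk⟩)]

section R3

variable {c c' : KCode} {i j k : ℕ} {si sj sk : ℤ} {t : Bool} {segs : List (KCode × KCode)}

lemma exists_pairOf_of_mem_r3Pairs {r : KCode × KCode} (hr : r ∈ r3Pairs i j k si sj sk t) :
    ∃ t' p q, r = (pairOf t' p q, pairOf (!t') p q) ∧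
      (p.id = i ∨ p.id = j ∨ p.id = k) ∧ (q.id = i ∨ q.id = j ∨ q.id = k) := by
  simp only [r3Pairs, List.mem_cons, List.not_mem_nil, or_false] at hr
  rcases hr with rfl | rfl | rfl <;> exact ⟨_, _, _, rfl, by simp, by simp⟩

lemma ReplC.crossTerm_r3 (hc : ValidK c) (hc' : ValidK c')
    (hsi : si = 1 ∨ si = -1) (hsj : sj = 1 ∨ sj = -1) (hsk : sk = 1 ∨ sk = -1)
    (hsegs : segs.Perm (r3Pairs i j k si sj sk t)) (h : ReplC c c' segs [])
    {p : Passage} (hp : p ∈ c) : crossTerm c' p.id = crossTerm c p.id := by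
  have hS : ∀ r ∈ segs, incSum r.1 = incSum r.2 := fun r hr => by
    obtain ⟨t', p, q, rfl, -⟩ := exists_pairOf_of_mem_r3Pairs (hsegs.subset hr)
    exact (pairOf_not_perm t' p q).incSum_eq.symm
  obtain ⟨ℓ₁, hA, hB, hA', hB'⟩ := h.exists_pairOf_slot hS (t := t)
    (p := ⟨i, true, si⟩) (q := ⟨j, true, sj⟩) (hsegs.mem_iff.mpr (by simp [r3Pairs]))
  obtain ⟨ℓ₂, hC, hD, hC', hD'⟩ := h.exists_pairOf_slot hS (t := t == (sj * sk == 1))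
    (p := ⟨i, false, si⟩) (q := ⟨k, true, sk⟩) (hsegs.mem_iff.mpr (by simp [r3Pairs]))
  obtain ⟨ℓ₃, hE, hF, hE', hF'⟩ := h.exists_pairOf_slot hS (t := t == (si * sk == 1))
    (p := ⟨j, false, sj⟩) (q := ⟨k, false, sk⟩) (hsegs.mem_iff.mpr (by simp [r3Pairs]))
  by_cases hpi : p.id = i
  · rw [hpi]
    refine crossTerm_eq_of_label_sub_eq (p := ⟨i, true, si⟩) hc hc' hA hC hA' hC' ?_
    rcases hsj with rfl | rfl <;> rcases hsk with rfl | rfl <;> cases t <;>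
      simp [Passage.inc] <;> ring
  by_cases hpj : p.id = j
  · rw [hpj]
    refine crossTerm_eq_of_label_sub_eq (p := ⟨j, true, sj⟩) hc hc' hB hE hB' hE' ?_
    rcases hsi with rfl | rfl <;> rcases hsk with rfl | rfl <;> cases t <;>
      simp [Passage.inc] <;> ring
  by_cases hpk : p.id = k
  · rw [hpk]
    refine crossTerm_eq_of_label_sub_eq (p := ⟨k, true, sk⟩) hc hc' hD hF hD' hF' ?_
    rcases hsi with rfl | rfl <;> rcases hsj with rfl | rfl <;> rcases hsk with rfl | rfl <;>
      cases t <;> simp [Passage.inc] <;> ring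
  refine crossTerm_eq_of_shift hc hc' hp 0 fun q ℓ hq hql => ?_
  rw [add_zero]
  refine h.mem_labeledPassages hS hql fun r hr hqr => ?_
  obtain ⟨t', p', q', rfl, hp', hq'⟩ := exists_pairOf_of_mem_r3Pairs (hsegs.subset hr)
  rcases mem_pairOf.mp hqr with rfl | rfl <;> omega

lemma ReplC.validAffP_r3 (hsi : si = 1 ∨ si = -1) (hsj : sj = 1 ∨ sj = -1)
    (hsk : sk = 1 ∨ sk = -1) (hsegs : segs.Perm (r3Pairs i j k si sj sk t))
    (h : ReplC c c' segs []) : validAffP c' = validAffP c := by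
  have hperm : c'.Perm c := h.perm_of_forall_perm fun r hr => by
    obtain ⟨t', p, q, rfl, -⟩ := exists_pairOf_of_mem_r3Pairs (hsegs.subset hr)
    exact pairOf_not_perm t' p q
  refine validAffP_eq_of_iff hperm.validK_iff fun hc => ?_
  have hc' := hperm.validK_iff.mpr hc
  rw [affP_eq_add_of_perm (k := []) hc hc' (by simpa using hperm)
    fun p hp _ => h.crossTerm_r3 hc hc' hsi hsj hsk hsegs hp]
  simp

end R3

/-! ### Isotopy invariance -/

/-- Every move preserves the number of components, so only singletons matter. -/
noncomputable def knotAffP : LLC → Option (LaurentPolynomial ℤ)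
  | [(_, c)] => validAffP c
  | _ => none

lemma knotAffP_eq_none {L : LLC} (h : ¬∃ x, L = [x]) : knotAffP L = none := by
  rcases L with _ | ⟨x, _ | ⟨y, L⟩⟩
  · rfl
  · exact absurd ⟨x, rfl⟩ h
  · rfl

lemma ReplL.eq_singleton_or {L L' : LLC} {segs : List (KCode × KCode)} (h : ReplL L L' segs) :
    (∃ k c c', L = [(k, c)] ∧ L' = [(k, c')] ∧ ReplC c c' segs []) ∨
      (knotAffP L = none ∧ knotAffP L' = none) := by
  rcases h with _ | ⟨k, hC, _ | ⟨k', hC', hL⟩⟩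
  · exact Or.inr ⟨rfl, rfl⟩
  · exact Or.inl ⟨k, _, _, rfl, rfl, hC⟩
  · exact Or.inr ⟨rfl, rfl⟩

@[simp] lemma idsOf_singleton (k : ℕ) (c : KCode) : idsOf [(k, c)] = crossIds c := by
  simp [idsOf, crossIdsL, plainL]

lemma knotAffP_eq_of_moveStep {L L' : LLC} (h : MoveStep L L') : knotAffP L = knotAffP L' := by
  cases h with
  | perm hp =>
    by_cases hL : ∃ x, L = [x]
    · obtain ⟨x, rfl⟩ := hL
      rw [List.perm_singleton.mp hp.symm]
    · rw [knotAffP_eq_none hL, knotAffP_eq_none fun ⟨x, hx⟩ =>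
        hL ⟨x, List.perm_singleton.mp (hx ▸ hp)⟩]
  | rotate k x y M =>
    cases M
    · exact validAffP_eq_of_iff List.perm_append_comm.validK_iff affP_append_comm
    · rfl
  | rename f hf =>
    rcases L with _ | ⟨⟨k, c⟩, _ | ⟨y, L⟩⟩
    · rfl
    · exact (validAffP_eq_of_iff (validK_relabel hf) (affP_relabel hf)).symm
    · rfl
  | r1 i o s hs hi hrep =>
    rcases hrep.eq_singleton_or with ⟨k, c, c', rfl, rfl, hC⟩ | ⟨h₁, h₂⟩
    · exact (hC.validAffP_r1 (p := ⟨i, o, s⟩) hs (by simpa using hi)).symm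
    · rw [h₁, h₂]
  | r2 i j o ord s hs hij hi hj hrep =>
    rcases hrep.eq_singleton_or with ⟨k, c, c', rfl, rfl, hC⟩ | ⟨h₁, h₂⟩
    · exact (hC.validAffP_r2 hs hij (by simpa using hi) (by simpa using hj)).symm
    · rw [h₁, h₂]
  | r3 i j k si sj sk hsi hsj hsk _ _ _ _ t segs hsegs hrep =>
    rcases hrep.eq_singleton_or with ⟨k, c, c', rfl, rfl, hC⟩ | ⟨h₁, h₂⟩
    · exact (hC.validAffP_r3 hsi hsj hsk hsegs).symm
    · rw [h₁, h₂]

lemma knotAffP_eq_of_isotopic {L L' : LLC} (h : Isotopic L L') : knotAffP L = knotAffP L' := by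
  induction h with
  | rel _ _ h => exact knotAffP_eq_of_moveStep h
  | refl => rfl
  | symm _ _ _ ih => exact ih.symm
  | trans _ _ _ _ _ ih₁ ih₂ => exact ih₁.trans ih₂

/-- The affine index polynomial `P_K(t)` is invariant under
oriented virtual isotopy: if two labeled oriented virtual knot diagrams are
related by oriented classical Reidemeister moves, virtual Reidemeister moves,
or the detour move (the latter two leave the Gauss code unchanged), then their
affine index polynomials are equal; hence `P_K(t)` is an invariant of virtual
knots. -/
theorem affP_isotopy_invariant (a b : KCode) (ha : ValidK a) (hb : ValidK b)
    (h : Isotopic [(0, a)] [(0, b)]) : affP a = affP b := by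
  simpa [knotAffP, validAffP, ha, hb] using knotAffP_eq_of_isotopic h
end

section
/- If K is a virtual knot diagram and K* denotes the flat mirror image of K (the diagram obtained by switching all classical crossings of K), then P_{K*}(t) = -P_K(t^{-1}). -/
/-!
# Virtual knots and links via signed Gauss codes

A virtual knot or link diagram, up to the virtual Reidemeister moves and the
detour move, is faithfully encoded by its signed oriented Gauss code: the
cyclic sequence, along each component, of passages through the classical
crossings, each passage recording the crossing's name, whether the strand
passes over or under, and the crossing sign.  Virtual crossings and the
detour move are invisible in this encoding, so oriented virtual isotopy is
generated by the oriented classical Reidemeister moves together with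
re-encoding moves (rotation of the base point, permutation of the components,
renaming of the crossings).
-/

open LaurentPolynomial

namespace Passage

def switch (p : Passage) : Passage := ⟨p.id, !p.isOver, -p.sign⟩

@[simp] lemma id_switch (p : Passage) : p.switch.id = p.id := rfl

@[simp] lemma isOver_switch (p : Passage) : p.switch.isOver = !p.isOver := rfl

@[simp] lemma sign_switch (p : Passage) : p.switch.sign = -p.sign := rfl

@[simp] lemma inc_switch (p : Passage) : p.switch.inc = p.inc := by
  cases h : p.isOver <;> simp [inc, h]

end Passage

lemma switchAll_eq_map_switch (a : KCode) : switchAll a = a.map Passage.switch := rfl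

section SwitchAll

variable (a : KCode) (i : ℕ)

lemma crossIds_switchAll : crossIds (switchAll a) = crossIds a := by
  simp [crossIds, switchAll_eq_map_switch, Function.comp_def]

lemma labelAt_switchAll (k : ℕ) : labelAt (switchAll a) k = labelAt a k := by
  simp [labelAt, switchAll_eq_map_switch, ← List.map_take, Function.comp_def]

lemma overPos_switchAll : overPos (switchAll a) i = underPos a i := by
  simp [overPos, underPos, switchAll_eq_map_switch, List.findIdx_map, Function.comp_def]

lemma underPos_switchAll : underPos (switchAll a) i = overPos a i := by
  simp [overPos, underPos, switchAll_eq_map_switch, List.findIdx_map, Function.comp_def]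

lemma sgn_switchAll : sgn (switchAll a) i = -sgn a i := by
  have hpred : (fun p : Passage => p.id == i) ∘ Passage.switch = fun p => p.id == i := rfl
  simp only [sgn, switchAll_eq_map_switch, List.find?_map, hpred]
  cases a.find? (fun p => p.id == i) <;> simp

/-- The switch exchanges the two passages of each crossing but leaves every arc label unchanged,
so the weight `label(over) - label(under) - sign` changes sign. -/
lemma wt_switchAll : wt (switchAll a) i = -wt a i := by
  rw [wt, wt, overPos_switchAll, underPos_switchAll, sgn_switchAll, labelAt_switchAll,
    labelAt_switchAll]
  ring

end SwitchAll

theorem affP_flat_mirror_general (a : KCode) :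
    affP (switchAll a) = - LaurentPolynomial.invert (affP a) := by
  rw [affP, affP, crossIds_switchAll, map_list_sum, List.sum_neg, List.map_map, List.map_map]
  refine congrArg List.sum (List.map_congr_left fun i _ => ?_)
  simp [sgn_switchAll, wt_switchAll]

/-- If `K*` denotes the flat mirror image of `K` (the diagram
obtained by switching all classical crossings of `K`), then
`P_{K*}(t) = -P_K(t⁻¹)`. -/
theorem affP_flat_mirror (a : KCode) (ha : ValidK a) :
    affP (switchAll a) = - LaurentPolynomial.invert (affP a) :=
  affP_flat_mirror_general a
end

section
/- If K is a virtual knot diagram and K^! denotes the vertical mirror image of K (the diagram obtained by reflecting K in a plane perpendicular to the plane of the diagram and reversing the orientation of the result), then P_{K^!}(t) = -P_K(t). -/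
/-!
# Virtual knots and links via signed Gauss codes

A virtual knot or link diagram, up to the virtual Reidemeister moves and the
detour move, is faithfully encoded by its signed oriented Gauss code: the
cyclic sequence, along each component, of passages through the classical
crossings, each passage recording the crossing's name, whether the strand
passes over or under, and the crossing sign.  Virtual crossings and the
detour move are invisible in this encoding, so oriented virtual isotopy is
generated by the oriented classical Reidemeister moves together with
re-encoding moves (rotation of the base point, permutation of the components,
renaming of the crossings).
-/

open LaurentPolynomial

/-!
Reflecting the diagram negates every crossing sign, hence every label increment, and
reversing the orientation traverses the Gauss code backwards.  So the arc entering a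
passage of `K^!` carries the label of the arc leaving the same passage of `K` (labels
close up around the knot because the over- and under-passage of a crossing have opposite
increments).  Leaving the over-passage of a crossing `c` lowers the label by `sgn c` and
leaving the under-passage raises it by `sgn c`; with the sign flip this leaves `W(c)`
unchanged, so every term `sgn(c) (t^{W(c)} - 1)` of `P_K` changes sign.
-/

namespace List

variable {α : Type*}

theorem findIdx_congr_of_mem {l : List α} {p q : α → Bool} (h : ∀ x ∈ l, p x = q x) :
    l.findIdx p = l.findIdx q := by
  induction l with
  | nil => rfl
  | cons x l ih =>
    simp only [findIdx_cons, h x mem_cons_self, ih fun y hy => h y (mem_cons_of_mem x hy)]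

theorem Nodup.idxOf_reverse [BEq α] [LawfulBEq α] {l : List α} (hl : l.Nodup) {x : α}
    (hx : x ∈ l) : l.reverse.idxOf x = l.length - 1 - l.idxOf x := by
  have hk := idxOf_lt_length_of_mem hx
  have hrev : l.reverse[l.length - 1 - l.idxOf x]'(by simp; omega) = x := by
    rw [getElem_reverse]
    simp only [show l.length - 1 - (l.length - 1 - l.idxOf x) = l.idxOf x by omega,
      getElem_idxOf]
  conv_lhs => rw [← hrev]
  exact (nodup_reverse.2 hl).idxOf_getElem _ _

end List

namespace Passage

def flipSign (p : Passage) : Passage := ⟨p.id, p.isOver, -p.sign⟩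

@[simp]
lemma inc_flipSign (p : Passage) : p.flipSign.inc = -p.inc := by
  unfold flipSign inc
  split <;> simp_all

end Passage

section KCode

variable {a : KCode} {i : ℕ}

lemma vmirror_eq_map_reverse (a : KCode) : vmirror a = a.reverse.map Passage.flipSign := by
  rw [vmirror, List.map_reverse]
  rfl

lemma mem_crossIds_iff : i ∈ crossIds a ↔ ∃ p ∈ a, p.id = i := by
  simp [crossIds]

lemma crossIds_vmirror_perm (a : KCode) : (crossIds (vmirror a)).Perm (crossIds a) := by
  rw [crossIds, crossIds, vmirror_eq_map_reverse, List.map_map, List.map_reverse]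
  exact (List.reverse_perm _).dedup

lemma exists_mem_sign_eq_sgn (hi : i ∈ crossIds a) :
    ∃ p ∈ a, p.id = i ∧ p.sign = sgn a i := by
  obtain ⟨p, hp, hpi⟩ := mem_crossIds_iff.1 hi
  obtain ⟨q, hq⟩ := Option.isSome_iff_exists.1
    (List.find?_isSome (p := fun p : Passage => p.id == i).2 ⟨p, hp, by simp [hpi]⟩)
  exact ⟨q, List.mem_of_find?_eq_some hq, by simpa using List.find?_some hq, by simp [sgn, hq]⟩

lemma labelAt_idxOf_succ {p : Passage} (hp : p ∈ a) :
    labelAt a (a.idxOf p + 1) = labelAt a (a.idxOf p) + p.inc := by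
  rw [labelAt, labelAt, List.take_add_one,
    List.getElem?_eq_getElem (List.idxOf_lt_length_of_mem hp), List.getElem_idxOf]
  simp

lemma labelAt_vmirror (hsum : (a.map Passage.inc).sum = 0) (k : ℕ) :
    labelAt (vmirror a) k = labelAt a (a.length - k) := by
  have hsplit := congrArg (fun l => (l.map Passage.inc).sum) (a.take_append_drop (a.length - k))
  simp only [List.map_append, List.sum_append, hsum] at hsplit
  have hinc : Passage.inc ∘ Passage.flipSign = Neg.neg ∘ Passage.inc :=
    funext Passage.inc_flipSign
  rw [labelAt, labelAt, vmirror_eq_map_reverse, List.map_take, List.map_map, hinc, ← List.map_map,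
    List.map_reverse, List.map_reverse, List.take_reverse, List.sum_reverse, List.length_map,
    List.length_map, ← List.map_drop, ← List.map_drop, ← List.sum_neg]
  omega

end KCode

namespace ValidK

variable {a : KCode} {i : ℕ}

lemma sign_eq_sgn (ha : ValidK a) {p : Passage} (hp : p ∈ a) : p.sign = sgn a p.id := by
  obtain ⟨q, hq, hqp, hsq⟩ := exists_mem_sign_eq_sgn (mem_crossIds_iff.2 ⟨p, hp, rfl⟩)
  rw [← hsq, (ha p hp).2.2.2 q hq hqp]

lemma mk_mem (ha : ValidK a) (hi : i ∈ crossIds a) (b : Bool) :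
    (⟨i, b, sgn a i⟩ : Passage) ∈ a := by
  obtain ⟨q, hq, rfl⟩ := mem_crossIds_iff.1 hi
  obtain ⟨-, hover, hunder, -⟩ := ha q hq
  obtain ⟨p, hp, hpq, hpb⟩ : ∃ p ∈ a, p.id = q.id ∧ p.isOver = b := by
    cases b
    · simpa using List.length_filter_pos_iff.1 (Nat.lt_of_lt_of_eq Nat.one_pos hunder.symm)
    · simpa using List.length_filter_pos_iff.1 (Nat.lt_of_lt_of_eq Nat.one_pos hover.symm)
  have hps := ha.sign_eq_sgn hp
  cases p
  simp_all

lemma nodup_s7 (ha : ValidK a) : a.Nodup := by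
  refine List.nodup_iff_count_le_one.2 fun p => ?_
  by_cases hp : p ∈ a
  · obtain ⟨-, hover, hunder, -⟩ := ha p hp
    rw [List.count_eq_countP]
    cases hb : p.isOver
    · refine (List.countP_mono_left fun q _ hq => ?_).trans
        (List.countP_eq_length_filter ▸ hunder).le
      simp_all
    · refine (List.countP_mono_left fun q _ hq => ?_).trans
        (List.countP_eq_length_filter ▸ hover).le
      simp_all
  · simp [List.count_eq_zero_of_not_mem hp]

lemma sum_inc_eq_zero (ha : ValidK a) : (a.map Passage.inc).sum = 0 := by
  rw [← List.sum_toFinset _ ha.nodup_s7]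
  refine Finset.sum_involution (fun p _ => ⟨p.id, !p.isOver, p.sign⟩) ?_ ?_ ?_ ?_
  · intro p _
    cases h : p.isOver <;> simp [Passage.inc, h]
  · intro p _ _ h
    simpa using congrArg Passage.isOver h
  · intro p hp
    rw [List.mem_toFinset] at hp ⊢
    rw [ha.sign_eq_sgn hp]
    exact ha.mk_mem (mem_crossIds_iff.2 ⟨p, hp, rfl⟩) _
  · intro p _
    simp

lemma beq_mk (ha : ValidK a) {q : Passage} (hq : q ∈ a) (b : Bool) :
    (q == ⟨i, b, sgn a i⟩) = (q.id == i && q.isOver == b) := by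
  have hqs := ha.sign_eq_sgn hq
  cases q with
  | mk id isOver sign =>
    rw [Bool.eq_iff_iff, beq_iff_eq, Bool.and_eq_true, beq_iff_eq, beq_iff_eq, Passage.mk.injEq]
    dsimp only at hqs ⊢
    subst hqs
    constructor
    · rintro ⟨rfl, rfl, -⟩
      exact ⟨rfl, rfl⟩
    · rintro ⟨rfl, rfl⟩
      exact ⟨rfl, rfl, rfl⟩

lemma overPos_eq_idxOf (ha : ValidK a) : overPos a i = a.idxOf ⟨i, true, sgn a i⟩ :=
  List.findIdx_congr_of_mem fun q hq => by simpa using (ha.beq_mk hq true).symm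

lemma underPos_eq_idxOf (ha : ValidK a) : underPos a i = a.idxOf ⟨i, false, sgn a i⟩ :=
  List.findIdx_congr_of_mem fun q hq => by simpa using (ha.beq_mk hq false).symm

lemma overPos_vmirror (ha : ValidK a) (hi : i ∈ crossIds a) :
    overPos (vmirror a) i = a.length - 1 - overPos a i := by
  rw [ha.overPos_eq_idxOf, ← ha.nodup_s7.idxOf_reverse (ha.mk_mem hi true), overPos,
    vmirror_eq_map_reverse, List.findIdx_map]
  exact List.findIdx_congr_of_mem fun q hq => by
    simpa [Passage.flipSign] using (ha.beq_mk (List.mem_reverse.1 hq) true).symm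

lemma underPos_vmirror (ha : ValidK a) (hi : i ∈ crossIds a) :
    underPos (vmirror a) i = a.length - 1 - underPos a i := by
  rw [ha.underPos_eq_idxOf, ← ha.nodup_s7.idxOf_reverse (ha.mk_mem hi false), underPos,
    vmirror_eq_map_reverse, List.findIdx_map]
  exact List.findIdx_congr_of_mem fun q hq => by
    simpa [Passage.flipSign] using (ha.beq_mk (List.mem_reverse.1 hq) false).symm

lemma sgn_vmirror (ha : ValidK a) (hi : i ∈ crossIds a) : sgn (vmirror a) i = -sgn a i := by
  obtain ⟨q, hq, hqi, hqs⟩ :=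
    exists_mem_sign_eq_sgn ((crossIds_vmirror_perm a).mem_iff.2 hi)
  rw [vmirror_eq_map_reverse, List.mem_map] at hq
  obtain ⟨p, hp, rfl⟩ := hq
  rw [← hqs, ← hqi]
  exact congrArg Neg.neg (ha.sign_eq_sgn (List.mem_reverse.1 hp))

lemma wt_vmirror (ha : ValidK a) (hi : i ∈ crossIds a) : wt (vmirror a) i = wt a i := by
  have hover := ha.mk_mem hi true
  have hunder := ha.mk_mem hi false
  have ho := List.idxOf_lt_length_of_mem hover
  have hu := List.idxOf_lt_length_of_mem hunder
  rw [wt, wt, ha.overPos_vmirror hi, ha.underPos_vmirror hi, ha.sgn_vmirror hi,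
    labelAt_vmirror ha.sum_inc_eq_zero, labelAt_vmirror ha.sum_inc_eq_zero,
    ha.overPos_eq_idxOf, ha.underPos_eq_idxOf,
    show a.length - (a.length - 1 - a.idxOf _) = a.idxOf ⟨i, true, sgn a i⟩ + 1 by omega,
    show a.length - (a.length - 1 - a.idxOf _) = a.idxOf ⟨i, false, sgn a i⟩ + 1 by omega,
    labelAt_idxOf_succ hover, labelAt_idxOf_succ hunder]
  simp only [Passage.inc, if_true, Bool.false_eq_true, if_false]
  ring

end ValidK

/-- If `K^!` denotes the vertical mirror image of `K` (the
diagram obtained by reflecting `K` in a plane perpendicular to the plane of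
the diagram and reversing the orientation of the result), then
`P_{K^!}(t) = -P_K(t)`. -/
theorem affP_vertical_mirror (a : KCode) (ha : ValidK a) :
    affP (vmirror a) = - affP a := by
  rw [affP, affP, ((crossIds_vmirror_perm a).map _).sum_eq, List.sum_neg, List.map_map]
  refine congrArg List.sum (List.map_congr_left fun i hi => ?_)
  simp [ha.sgn_vmirror hi, ha.wt_vmirror hi]
end
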